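/- Fix n ≥ 2, k ∈ ℝ, m ∈ ℤ. On the open set of jet points x = (x_0, x_1, …, x_{n−1}) ∈ ℝ^n with x_0 ≠ 0, define recursively p_0(x) = x_0 and p_{j+1}(x) = Σ_{i=0}^{n−2} x_{i+1}·∂p_j/∂x_i (x) + k·x_0^m·p_j(x) for 0 ≤ j ≤ n−2 (the formal total-derivative recursion defining the chain polynomials). For 2 ≤ i ≤ n define I_i(t,x) = Σ_{r=1}^{i} (−1)^{r+1} · t^{i−r}/(i−r)! · p_{n−r}(x)/p_{n−1}(x). Then at every point (t,x) with x_0 ≠ 0 and p_{n−1}(x) ≠ 0, the determinant of the (n−1)×(n−1) matrix (∂I_i/∂x_j)_{2≤i≤n, 1≤j≤n−1} equals x_0/(p_{n−1}(x))^n, which is nonzero; consequently the Jacobian matrix of (I_2, …, I_n) with respect to the variables (t, x_0, x_1, …, x_{n−1}) has rank n−1 at every such point, i.e., the n−1 first integrals I_{(n;2)}, …, I_{(n;n)} are functionally independent. -/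

import Mathlib

/-!
Translating `y` along the `x_j`-axis does not change `p_s(y)` when `j > s`, and adds the length
of the translation to `p_s(y)` when `j = s` and `y_0 ≠ 0`: each total derivative raises the jet
order by exactly one. So the Jacobian `(∂p_s/∂x_j)` is lower unitriangular.

`∂I_i/∂x_j` combines the partials of the ratios `p_{n-r}/p_{n-1}` with the lower triangular
coefficients `(-1)^{r+1} t^{i-r}/(i-r)!` (the ratio for `r = 1` is constant), so up to sign
`det M` is the Jacobian determinant of `(p_0, …, p_{n-2})/p_{n-1}` in `x_1, …, x_{n-1}`. The
gradient of `p_0/p_{n-1}` is `-x_0 ∇p_{n-1}/p_{n-1}^2`; subtracting multiples of it from the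
other rows leaves the rows `∇p_s/p_{n-1}`, triangular after a cyclic shift, whence
`±x_0/p_{n-1}^n`, and the two signs cancel. Finally `M` is an invertible square submatrix of the
full Jacobian, which has `n - 1` rows.
-/

/-- The chain terms in jet coordinates `x = (x_0, …, x_{n-1})`:
`p_0(x) = x_0` and `p_{j+1}(x) = Σ_{i=0}^{n-2} x_{i+1}·∂p_j/∂x_i(x) + k·x_0^m·p_j(x)`. -/
noncomputable def jetP (n : ℕ) [NeZero n] (k : ℝ) (m : ℤ) : ℕ → (Fin n → ℝ) → ℝ
  | 0 => fun x => x 0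
  | j + 1 => fun x =>
      (∑ i : Fin n, if h : (i : ℕ) + 1 < n then
        x ⟨(i : ℕ) + 1, h⟩ * fderiv ℝ (jetP n k m j) x (Pi.single i 1) else 0)
      + k * x 0 ^ m * jetP n k m j x

open Finset
open scoped ContDiff

theorem fderiv_apply_eq_zero_of_forall_add_smul {E : Type*} [NormedAddCommGroup E]
    [NormedSpace ℝ E] {f : E → ℝ} {y v : E} (h : ∀ t : ℝ, f (y + t • v) = f y) :
    fderiv ℝ f y v = 0 := by
  by_cases hf : DifferentiableAt ℝ f y
  · rw [← hf.lineDeriv_eq_fderiv, lineDeriv]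
    simp [h]
  · simp [fderiv_zero_of_not_differentiableAt hf]

theorem fderiv_apply_eq_of_forall_add_smul {E : Type*} [NormedAddCommGroup E]
    [NormedSpace ℝ E] {f : E → ℝ} {y v : E} {c : ℝ} (hf : DifferentiableAt ℝ f y)
    (h : ∀ t : ℝ, f (y + t • v) = f y + t * c) : fderiv ℝ f y v = c := by
  rw [← hf.lineDeriv_eq_fderiv, lineDeriv]
  simp [h]

theorem fderiv_div_apply {E : Type*} [NormedAddCommGroup E] [NormedSpace ℝ E] {f g : E → ℝ}
    {x : E} (hf : DifferentiableAt ℝ f x) (hg : DifferentiableAt ℝ g x) (hx : g x ≠ 0) (v : E) :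
    fderiv ℝ (fun y => f y / g y) x v =
      (fderiv ℝ f x v * g x - f x * fderiv ℝ g x v) / g x ^ 2 := by
  have hquot := (hf.hasFDerivAt.hasLineDerivAt v).div (hg.hasFDerivAt.hasLineDerivAt v)
    (by simpa using hx)
  have hdiff : DifferentiableAt ℝ (fun y => f y / g y) x := by fun_prop (disch := exact hx)
  simp only [zero_smul, add_zero] at hquot
  exact (hdiff.hasFDerivAt.hasLineDerivAt v).unique hquot

theorem fderiv_sum_const_mul_apply {E ι : Type*} [NormedAddCommGroup E] [NormedSpace ℝ E]
    {s : Finset ι} {c : ι → ℝ} {f : ι → E → ℝ} {x : E}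
    (hf : ∀ i ∈ s, DifferentiableAt ℝ (f i) x) (v : E) :
    fderiv ℝ (fun y => ∑ i ∈ s, c i * f i y) x v = ∑ i ∈ s, c i * fderiv ℝ (f i) x v := by
  rw [(HasFDerivAt.fun_sum fun i hi => (hf i hi).hasFDerivAt.const_mul (c i)).fderiv]
  simp

theorem contDiffAt_zpow_of_ne_zero (m : ℤ) {y : ℝ} (hy : y ≠ 0) :
    ContDiffAt ℝ ∞ (fun z : ℝ => z ^ m) y := by
  rcases m with l | l
  · simpa using contDiffAt_id.pow l
  · have h := ((contDiffAt_id (𝕜 := ℝ) (n := ∞) (x := y)).pow (l + 1)).inv (pow_ne_zero _ hy)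
    simp only [Int.negSucc_eq, zpow_neg, ← Nat.cast_succ, zpow_natCast]
    exact h

open Matrix

theorem Fin.sign_revPerm (n : ℕ) :
    Equiv.Perm.sign (Fin.revPerm : Equiv.Perm (Fin n)) = ∏ i : Fin n, (-1) ^ (i : ℕ) := by
  induction n with
  | zero => rfl
  | succ n ih =>
    have hrev : (Fin.revPerm : Equiv.Perm (Fin (n + 1))) =
        (Fin.cycleRange (Fin.last n)).symm * Equiv.Perm.decomposeFin.symm (0, Fin.revPerm) := by
      ext i
      cases i using Fin.cases with
      | zero => simp
      | succ j =>
        simp only [Equiv.Perm.coe_mul, Function.comp_apply,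
          Equiv.Perm.decomposeFin_symm_apply_succ, Equiv.swap_self, Equiv.refl_apply,
          Fin.cycleRange_symm_succ, Fin.succAbove_last, Fin.revPerm_apply, Fin.rev_succ]
    rw [hrev, map_mul, Equiv.Perm.sign_symm, Fin.sign_cycleRange,
      Equiv.Perm.decomposeFin.symm_sign, ih, Fin.prod_univ_castSucc]
    simp [mul_comm]

theorem det_alternating_taylor_sum {K : Type*} [Field K] (N : ℕ) (t : K)
    (F : ℕ → Fin (N + 1) → K) (hF : F 1 = 0) :
    det (of fun a b : Fin (N + 1) => ∑ r ∈ Icc 1 ((a : ℕ) + 2),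
        (-1 : K) ^ (r + 1) * t ^ ((a : ℕ) + 2 - r) / ((a : ℕ) + 2 - r).factorial * F r b) =
      (-1) ^ (N + 1) * det (of fun s b : Fin (N + 1) => F (N + 2 - s) b) := by
  set L := of fun a ρ : Fin (N + 1) => if (ρ : ℕ) ≤ a then
    (-1 : K) ^ ((ρ : ℕ) + 3) * t ^ ((a : ℕ) - ρ) / ((a : ℕ) - ρ).factorial else 0
  have hfac : (of fun a b : Fin (N + 1) => ∑ r ∈ Icc 1 ((a : ℕ) + 2),
        (-1 : K) ^ (r + 1) * t ^ ((a : ℕ) + 2 - r) / ((a : ℕ) + 2 - r).factorial * F r b) =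
      L * of fun (ρ b : Fin (N + 1)) => F (ρ + 2) b := by
    ext a b
    simp only [mul_apply, of_apply, L]
    rw [← Finset.Ico_add_one_right_eq_Icc, sum_Ico_eq_sum_range,
      Nat.add_sub_cancel, sum_range_succ',
      Fin.sum_univ_eq_sum_range (fun ρ => (if ρ ≤ (a : ℕ) then
        (-1 : K) ^ (ρ + 3) * t ^ ((a : ℕ) - ρ) / ((a : ℕ) - ρ).factorial else 0) * F (ρ + 2) b),
      ← sum_range_add_sum_Ico _ (show (a : ℕ) + 1 ≤ N + 1 by omega)]
    simp only [hF, Pi.zero_apply, mul_zero, add_zero]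
    rw [sum_eq_zero (s := Ico _ _) fun ρ hρ => by rw [if_neg (by simp at hρ; omega), zero_mul],
      add_zero]
    refine sum_congr (by simp) fun ρ hρ => ?_
    rw [if_pos (by simp at hρ; omega), show (a : ℕ) + 2 - (1 + (ρ + 1)) = a - ρ by omega,
      show 1 + (ρ + 1) = ρ + 2 by omega]
  have hL : L.det = ∏ ρ : Fin (N + 1), (-1) ^ ((ρ : ℕ) + 3) := by
    rw [det_of_isLowerTriangular L fun a ρ h => if_neg (not_le.2 h)]
    simp [L]
  have hrev : (of fun ρ b : Fin (N + 1) => F (ρ + 2) b) =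
      (of fun s b : Fin (N + 1) => F (N + 2 - s) b).submatrix Fin.revPerm id := by
    ext ρ b
    simp only [of_apply, submatrix_apply, Fin.revPerm_apply, Fin.val_rev, id]
    congr 1
    omega
  have hsign (ρ : ℕ) : (-1 : K) ^ (ρ + 3) * (-1) ^ ρ = -1 := by
    rw [← pow_add]
    exact Odd.neg_one_pow ⟨ρ + 1, by ring⟩
  rw [hfac, det_mul, hL, hrev, det_permute, Fin.sign_revPerm, ← mul_assoc]
  push_cast
  simp [← prod_mul_distrib, hsign]

theorem det_tail_block_eq_one_of_unitLowerTriangular {K : Type*} [Field K] (N : ℕ)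
    (A : ℕ → Fin (N + 2) → K) (hA : ∀ (i : ℕ) (j : Fin (N + 2)), i < j → A i j = 0)
    (hA1 : ∀ j : Fin (N + 2), A j j = 1) :
    det (of fun i b : Fin (N + 1) => A (i + 1) b.succ) = 1 := by
  rw [det_of_isLowerTriangular (of fun i b : Fin (N + 1) => A (i + 1) b.succ)
    fun i b hib => hA _ _ (by simpa using hib)]
  exact prod_eq_one fun i _ => by simpa using hA1 i.succ

theorem det_jacobian_quotients {K : Type*} [Field K] (N : ℕ) (p : ℕ → K)
    (A : ℕ → Fin (N + 2) → K) (hA : ∀ (i : ℕ) (j : Fin (N + 2)), i < j → A i j = 0)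
    (hA1 : ∀ j : Fin (N + 2), A j j = 1) (hP : p (N + 1) ≠ 0) :
    det (of fun s b : Fin (N + 1) =>
        (A s b.succ * p (N + 1) - p s * A (N + 1) b.succ) / p (N + 1) ^ 2) =
      (-1) ^ (N + 1) * p 0 / p (N + 1) ^ (N + 2) := by
  set P := p (N + 1)
  set G := of fun s b : Fin (N + 1) => (A s b.succ * P - p s * A (N + 1) b.succ) / P ^ 2
  set a : Fin (N + 1) → K := fun b => A (N + 1) b.succ
  set B := of fun i b : Fin (N + 1) => A (i + 1) b.succ
  -- Row `0` of `G` is `-(p 0 / P ^ 2) • a`; rotate it to the bottom and use it as a pivot.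
  set G' := G.submatrix (finRotate (N + 1)) id
  have hrot : G.det = (-1) ^ N * G'.det := by
    rw [det_permute, sign_finRotate, ← mul_assoc]
    simp [← pow_add, ← two_mul, pow_mul]
  have hlast : G' = updateRow G' (Fin.last N) ((-(p 0 / P ^ 2)) • a) := by
    ext i b
    rcases eq_or_ne i (Fin.last N) with rfl | hi
    · simp [G', G, a, hA 0 b.succ (by simp)]
      ring
    · simp [hi]
  have hred : (updateRow G' (Fin.last N) a).det =
      (of fun i b : Fin (N + 1) => (if i = Fin.last N then 1 else P⁻¹) * B i b).det := by
    refine det_eq_of_forall_row_eq_smul_add_const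
      (fun i => if i = Fin.last N then 0 else -(p (i + 1) / P ^ 2)) (Fin.last N) (by simp) ?_
    intro i b
    rcases eq_or_ne i (Fin.last N) with rfl | hi
    · simp [a, B]
    · simp [hi, G', G, a, B, Fin.val_add_one_of_lt (Fin.lt_last_iff_ne_last.2 hi)]
      field_simp
      ring
  rw [hrot, hlast, det_updateRow_smul, hred, det_mul_column,
    det_tail_block_eq_one_of_unitLowerTriangular N A hA hA1, Fin.prod_univ_castSucc]
  simp [Fin.castSucc_ne_last]
  field_simp
  ring

theorem Matrix.rank_eq_of_isUnit_det_submatrix {K ι : Type*} [Field K] [Fintype ι] {m : ℕ}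
    (A : Matrix (Fin m) ι K) (c : Fin m → ι) (h : IsUnit (A.submatrix id c).det) :
    A.rank = m := by
  refine le_antisymm (A.rank_le_card_height.trans (Fintype.card_fin m).le) ?_
  simpa [rank_of_isUnit _ ((isUnit_iff_isUnit_det _).2 h)] using rank_submatrix_le A id c

section JetCoordinates

variable {n : ℕ} [NeZero n] {k : ℝ} {m : ℤ}

theorem jetP_succ (j : ℕ) : jetP n k m (j + 1) = fun x =>
    (∑ i : Fin n, if h : (i : ℕ) + 1 < n then
      x ⟨(i : ℕ) + 1, h⟩ * fderiv ℝ (jetP n k m j) x (Pi.single i 1) else 0)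
    + k * x 0 ^ m * jetP n k m j x := rfl

theorem contDiffAt_jetP (j : ℕ) {x : Fin n → ℝ} (hx : x 0 ≠ 0) :
    ContDiffAt ℝ ∞ (jetP n k m j) x := by
  induction j with
  | zero => exact (contDiff_apply ℝ ℝ 0).contDiffAt
  | succ j ih =>
    have hD := ih.fderiv_right (m := ∞) le_rfl
    rw [jetP_succ]
    refine (ContDiffAt.sum fun i _ => ?_).add ?_
    · split_ifs
      · exact (contDiff_apply ℝ ℝ _).contDiffAt.mul (hD.clm_apply contDiffAt_const)
      · exact contDiffAt_const
    · exact (contDiffAt_const.mul ((contDiffAt_zpow_of_ne_zero m hx).comp x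
        (contDiff_apply ℝ ℝ 0).contDiffAt)).mul ih

theorem jetP_succ_add_smul_single {s i : ℕ} (hi : i + 1 < n)
    (hinv : ∀ (y : Fin n → ℝ) (t : ℝ),
      jetP n k m s (y + t • Pi.single ⟨i + 1, hi⟩ 1) = jetP n k m s y)
    (y : Fin n → ℝ) (t : ℝ) :
    jetP n k m (s + 1) (y + t • Pi.single ⟨i + 1, hi⟩ 1) =
      jetP n k m (s + 1) y + t * fderiv ℝ (jetP n k m s) y (Pi.single ⟨i, by omega⟩ 1) := by
  have hD : fderiv ℝ (jetP n k m s) (y + t • Pi.single ⟨i + 1, hi⟩ 1) =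
      fderiv ℝ (jetP n k m s) y := by
    rw [← fderiv_comp_add_right]
    simp only [hinv]
  set w : Fin n → ℝ := t • Pi.single ⟨i + 1, hi⟩ 1
  have hsummand (l : Fin n) :
      (if h : (l : ℕ) + 1 < n then
        (y + w) ⟨(l : ℕ) + 1, h⟩ * fderiv ℝ (jetP n k m s) y (Pi.single l 1) else 0) =
      (if h : (l : ℕ) + 1 < n then
        y ⟨(l : ℕ) + 1, h⟩ * fderiv ℝ (jetP n k m s) y (Pi.single l 1) else 0) +
      if l = ⟨i, by omega⟩ then t * fderiv ℝ (jetP n k m s) y (Pi.single l 1) else 0 := by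
    split_ifs <;> simp_all [w, Fin.ext_iff, add_mul]
  have hw0 : (y + w) 0 = y 0 := by simp [w, Fin.ext_iff]
  have hs : jetP n k m s (y + w) = jetP n k m s y := hinv y t
  simp only [jetP_succ, hD, hs, hw0]
  rw [sum_congr rfl fun l _ => hsummand l, sum_add_distrib, sum_ite_eq', if_pos (mem_univ _)]
  ring

theorem jetP_add_smul_single_of_lt {s : ℕ} {j : Fin n} (hj : s < j) (y : Fin n → ℝ) (t : ℝ) :
    jetP n k m s (y + t • Pi.single j 1) = jetP n k m s y := by
  induction s generalizing j y t with
  | zero => simp [jetP, Fin.ext_iff, hj.ne]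
  | succ s ih =>
    obtain ⟨i, hi, rfl⟩ : ∃ i, ∃ hi : i + 1 < n, j = ⟨i + 1, hi⟩ :=
      ⟨j - 1, by omega, Fin.ext (by simp; omega)⟩
    replace hj : s < i := by simpa using hj
    rw [jetP_succ_add_smul_single hi (ih (by simp; omega)),
      fderiv_apply_eq_zero_of_forall_add_smul (ih (by simp; omega) y), mul_zero, add_zero]

theorem fderiv_jetP_single_of_lt {s : ℕ} {j : Fin n} (hj : s < j) (y : Fin n → ℝ) :
    fderiv ℝ (jetP n k m s) y (Pi.single j 1) = 0 :=
  fderiv_apply_eq_zero_of_forall_add_smul (jetP_add_smul_single_of_lt hj y)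

theorem jetP_add_smul_single_self {s : ℕ} (hs : s < n) {y : Fin n → ℝ} (hy : y 0 ≠ 0) (t : ℝ) :
    jetP n k m s (y + t • Pi.single ⟨s, hs⟩ 1) = jetP n k m s y + t := by
  induction s generalizing t with
  | zero => simp [jetP]
  | succ s ih =>
    rw [jetP_succ_add_smul_single hs (jetP_add_smul_single_of_lt (by simp)),
      fderiv_apply_eq_of_forall_add_smul (c := 1)
        ((contDiffAt_jetP s hy).differentiableAt (by simp)) (by simpa using ih (by omega)),
      mul_one]

theorem fderiv_jetP_single_self {s : ℕ} (hs : s < n) {y : Fin n → ℝ} (hy : y 0 ≠ 0) :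
    fderiv ℝ (jetP n k m s) y (Pi.single ⟨s, hs⟩ 1) = 1 :=
  fderiv_apply_eq_of_forall_add_smul ((contDiffAt_jetP s hy).differentiableAt (by simp))
    (by simpa using jetP_add_smul_single_self hs hy)

theorem det_fderiv_jetP_div {N : ℕ} {x : Fin (N + 2) → ℝ} (hx0 : x 0 ≠ 0)
    (hp : jetP (N + 2) k m (N + 1) x ≠ 0) :
    det (of fun s b : Fin (N + 1) => fderiv ℝ
        (fun y => jetP (N + 2) k m s y / jetP (N + 2) k m (N + 1) y) x (Pi.single b.succ 1)) =
      (-1) ^ (N + 1) * x 0 / jetP (N + 2) k m (N + 1) x ^ (N + 2) := by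
  have hdiff (s : ℕ) : DifferentiableAt ℝ (jetP (N + 2) k m s) x :=
    (contDiffAt_jetP s hx0).differentiableAt (by simp)
  simp only [fderiv_div_apply (hdiff _) (hdiff _) hp]
  exact det_jacobian_quotients N (fun s => jetP (N + 2) k m s x)
    (fun s j => fderiv ℝ (jetP (N + 2) k m s) x (Pi.single j 1))
    (fun i j h => fderiv_jetP_single_of_lt h x) (fun j => fderiv_jetP_single_self j.isLt hx0) hp

end JetCoordinates

theorem functional_independence_of_first_integrals
    (n : ℕ) [NeZero n] (hn : 2 ≤ n) (k : ℝ) (m : ℤ)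
    (Ifun : ℕ → ℝ → (Fin n → ℝ) → ℝ)
    (hIfun : ∀ i t x, Ifun i t x =
      ∑ r ∈ Finset.Icc 1 i,
        (-1 : ℝ) ^ (r + 1) * t ^ (i - r) / (i - r).factorial *
          (jetP n k m (n - r) x / jetP n k m (n - 1) x))
    (t : ℝ) (x : Fin n → ℝ) (hx0 : x 0 ≠ 0) (hp : jetP n k m (n - 1) x ≠ 0)
    (M : Matrix (Fin (n - 1)) (Fin (n - 1)) ℝ)
    (hM : ∀ a b : Fin (n - 1), M a b =
      fderiv ℝ (fun y => Ifun ((a : ℕ) + 2) t y) x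
        (Pi.single ⟨(b : ℕ) + 1, by have := b.isLt; omega⟩ 1))
    (Mfull : Matrix (Fin (n - 1)) (Fin (n + 1)) ℝ)
    (hMfull : ∀ (a : Fin (n - 1)) (c : Fin (n + 1)), Mfull a c =
      if hc : (c : ℕ) = 0 then deriv (fun s => Ifun ((a : ℕ) + 2) s x) t
      else fderiv ℝ (fun y => Ifun ((a : ℕ) + 2) t y) x
        (Pi.single ⟨(c : ℕ) - 1, by have := c.isLt; omega⟩ 1)) :
    M.det = x 0 / (jetP n k m (n - 1) x) ^ n ∧
    x 0 / (jetP n k m (n - 1) x) ^ n ≠ 0 ∧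
    Mfull.rank = n - 1 := by
  obtain ⟨N, rfl⟩ : ∃ N, n = N + 2 := ⟨n - 2, by omega⟩
  have hdiff (s : ℕ) : DifferentiableAt ℝ (jetP (N + 2) k m s) x :=
    (contDiffAt_jetP s hx0).differentiableAt (by simp)
  replace hp : jetP (N + 2) k m (N + 1) x ≠ 0 := hp
  set P := jetP (N + 2) k m (N + 1) x
  set F : ℕ → Fin (N + 1) → ℝ := fun r b => fderiv ℝ
    (fun y => jetP (N + 2) k m (N + 2 - r) y / jetP (N + 2) k m (N + 1) y) x (Pi.single b.succ 1)
  have hMF : M = of fun a b : Fin (N + 1) => ∑ r ∈ Icc 1 ((a : ℕ) + 2),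
      (-1 : ℝ) ^ (r + 1) * t ^ ((a : ℕ) + 2 - r) / ((a : ℕ) + 2 - r).factorial * F r b := by
    ext a b
    rw [hM, of_apply]
    simp_rw [hIfun]
    exact fderiv_sum_const_mul_apply (fun r _ => by fun_prop (disch := exact hp)) _
  have hF1 : F 1 = 0 := funext fun b => by
    simp only [F, Pi.zero_apply, show N + 2 - 1 = N + 1 from rfl]
    rw [fderiv_div_apply (hdiff _) (hdiff _) hp, mul_comm, sub_self, zero_div]
  have hdet : M.det = x 0 / P ^ (N + 2) := by
    have hrev : (of fun s b : Fin (N + 1) => F (N + 2 - s) b) =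
        of fun s b : Fin (N + 1) => fderiv ℝ
          (fun y => jetP (N + 2) k m s y / jetP (N + 2) k m (N + 1) y) x (Pi.single b.succ 1) := by
      ext s b
      simp only [of_apply, F, show N + 2 - (N + 2 - s) = s by omega]
    rw [hMF, det_alternating_taylor_sum N t F hF1, hrev, det_fderiv_jetP_div hx0 hp,
      mul_div_assoc, ← mul_assoc, ← mul_pow, neg_one_mul, neg_neg, one_pow, one_mul]
  refine ⟨hdet, div_ne_zero hx0 (pow_ne_zero _ hp), ?_⟩
  set c : Fin (N + 2 - 1) → Fin (N + 2 + 1) := fun b => ⟨b + 2, by omega⟩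
  have hsub : Mfull.submatrix id c = M := by
    ext a b
    rw [hM, submatrix_apply, hMfull, dif_neg (by simp [c])]
    rfl
  refine Mfull.rank_eq_of_isUnit_det_submatrix c ?_
  rw [hsub, hdet]
  exact isUnit_iff_ne_zero.2 (div_ne_zero hx0 (pow_ne_zero _ hp))
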